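/- Assume r ≥ 2. The elements r_0, r_1, ..., r_r of W satisfy the Coxeter relations of affine type A_{2r}^{(2)}: each r_i has order 2; the product r_0 r_1 has order 4; the product r_{r-1} r_r has order 4; r_i r_{i+1} has order 3 for every 1 ≤ i ≤ r-2; and r_i r_j = r_j r_i whenever 0 ≤ i < j ≤ r with j - i ≥ 2. -/

import Mathlib

noncomputable section

open CoxeterSystem
open Fin.NatCast

/-- The Coxeter matrix of the affine Weyl group of type `Ã_{2r}`:
vertices `0, …, 2r` arranged in a cycle mod `N = 2r+1`; `m i j = 3` if
`i - j ≡ ±1 (mod N)`, `m i j = 2` for other off-diagonal pairs. -/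
def affACoxeterMatrix (r : ℕ) : CoxeterMatrix (Fin (2 * r + 1)) where
  M i j := if i = j then 1 else if i = j + 1 ∨ j = i + 1 then 3 else 2
  isSymm := by
    apply Matrix.IsSymm.ext
    intro i j
    by_cases h : j = i
    · subst h; rfl
    · rw [if_neg h, if_neg (fun hh : i = j => h hh.symm)]
      exact if_congr or_comm rfl rfl
  diagonal i := if_pos rfl
  off_diagonal i j h := by
    rw [if_neg h]
    split <;> omega

/-- The affine Weyl group `W` of type `Ã_{2r}`, as the Coxeter group of the above matrix. -/
abbrev AffW (r : ℕ) : Type := (affACoxeterMatrix r).Group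

/-- The canonical Coxeter system on `AffW r`. -/
def affCS (r : ℕ) : CoxeterSystem (affACoxeterMatrix r) (AffW r) :=
  (affACoxeterMatrix r).toCoxeterSystem

/-- The simple reflection `s i` (index taken mod `2r+1`). -/
def sgen (r i : ℕ) : AffW r := (affCS r).simple ((i : ℕ) : Fin (2 * r + 1))

/-- The word in the simple reflections representing the generator `r_i` of the
relative Weyl group: `r_0 = s_0`, `r_i = s_i s_{2r+1-i}` for `1 ≤ i ≤ r-1`,
`r_r = s_r s_{r+1} s_r`. -/
def rword (r : ℕ) : ℕ → List (Fin (2 * r + 1)) := fun i =>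
  if i = 0 then [(0 : Fin (2 * r + 1))]
  else if i < r then [((i : ℕ) : Fin (2 * r + 1)), ((2 * r + 1 - i : ℕ) : Fin (2 * r + 1))]
  else [((r : ℕ) : Fin (2 * r + 1)), ((r + 1 : ℕ) : Fin (2 * r + 1)), ((r : ℕ) : Fin (2 * r + 1))]

/-- The element `r_i` of `W`. -/
def rgen (r i : ℕ) : AffW r := (affCS r).wordProd (rword r i)

/-- The list `[a, a+1, …, b]` (empty if `b < a`). -/
def ascSeq (a b : ℕ) : List ℕ := List.range' a (b + 1 - a)

/-- The list `[b, b-1, …, a]` (empty if `b < a`). -/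
def descSeq (a b : ℕ) : List ℕ := (List.range' a (b + 1 - a)).reverse

/-- The expansion, as a word in the simple reflections, of the block
`r_0 r_1 ⋯ r_{r-1} r_r r_{r-1} ⋯ r_k`. -/
def blockWord (r k : ℕ) : List (Fin (2 * r + 1)) :=
  ((ascSeq 0 r ++ descSeq k (r - 1)).map (rword r)).flatten

/-- The element `r_0 r_1 ⋯ r_{r-1} r_r r_{r-1} ⋯ r_k` of `W`. -/
def blockEl (r k : ℕ) : AffW r := (affCS r).wordProd (blockWord r k)

/-- The expansion, as a word in the simple reflections, of
`ϖ_k = (r_0 r_1 ⋯ r_{r-1} r_r r_{r-1} ⋯ r_k)^k`. -/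
def piWord (r k : ℕ) : List (Fin (2 * r + 1)) :=
  (List.replicate k (blockWord r k)).flatten

/-- The element `ϖ_k = (r_0 r_1 ⋯ r_{r-1} r_r r_{r-1} ⋯ r_k)^k` of `W`. -/
def piEl (r k : ℕ) : AffW r := (affCS r).wordProd (piWord r k)

/-- The expansion of the full block `r_0 r_1 ⋯ r_{r-1} r_r` as a word. -/
def fullBlockWord (r : ℕ) : List (Fin (2 * r + 1)) :=
  ((ascSeq 0 r).map (rword r)).flatten

/-- The element `r_0 r_1 ⋯ r_{r-1} r_r` of `W`. -/
def fullBlockEl (r : ℕ) : AffW r := (affCS r).wordProd (fullBlockWord r)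


/-!
Every upper bound is a word identity among the simple reflections. For `0 < i < r`, `r_i` is
a product of two commuting reflections and `r_r` is a conjugate of `s_{r+1}`. The products
`r_0 r_1 = s_0 s_1 s_{2r}` and `r_r · r_{r-1}` (a conjugate of `r_{r-1} r_r`) are Coxeter
elements of configurations of type `A₃`, whose cube relations and single commutation force
`(abc)² = (cba)²`, i.e. `(abc)⁴ = 1`. For `1 ≤ i ≤ r-2`, `r_i r_{i+1}` is the product of the
commuting elements `s_i s_{i+1}` and `s_{N-i} s_{N-i-1}` of order 3. Finally the letters of
`r_i` are the `s_n` with `n ≡ ±i (mod N)`, and for `j - i ≥ 2` these are never adjacent on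
the cycle, so `r_i` and `r_j` commute.

The lower bounds come from the permutation representation `s_i ↦ (i i+1)` of `W` on `ℤ/N`:
each relevant power moves an explicit point.
-/

section InvolutionRelations

variable {G : Type*} [Group G] {a b c : G}

lemma braid_of_mul_pow_three (ha : a * a = 1) (hb : b * b = 1) (h : (a * b) ^ 3 = 1) :
    a * (b * a) = b * (a * b) := by
  have : a * (b * a) * (b * (a * b)) = 1 := by
    rw [← h]; simp only [pow_succ, pow_zero, one_mul, mul_assoc]
  rw [eq_inv_of_mul_eq_one_left this]
  simp [mul_assoc, inv_eq_of_mul_eq_one_left ha, inv_eq_of_mul_eq_one_left hb]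

lemma conj_pow_eq_one_of_mul_self {g x : G} {n : ℕ} (hg : g * g = 1) (h : x ^ n = 1) :
    (g * x * g) ^ n = 1 := by
  nth_rewrite 2 [← inv_eq_of_mul_eq_one_left hg]
  rw [conj_pow, h, mul_one, mul_inv_cancel]

lemma orderOf_eq_four {x : G} (h2 : x ^ 2 ≠ 1) (h4 : x ^ 4 = 1) : orderOf x = 4 :=
  orderOf_eq_prime_pow (p := 2) (n := 1) h2 h4

/-- The Coxeter element of type `A₃` with `a` in the middle of the diagram. -/
lemma mul_mul_pow_four_eq_one (ha : a * a = 1) (hb : b * b = 1) (hc : c * c = 1)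
    (hab : (a * b) ^ 3 = 1) (hac : (a * c) ^ 3 = 1) (hbc : Commute b c) :
    (a * b * c) ^ 4 = 1 := by
  have aba := braid_of_mul_pow_three ha hb hab
  have bab (x : G) : a * (b * (a * x)) = b * (a * (b * x)) := by
    simp only [← mul_assoc] at aba ⊢; rw [aba]
  have cac (x : G) : a * (c * (a * x)) = c * (a * (c * x)) := by
    have aca := braid_of_mul_pow_three ha hc hac
    simp only [← mul_assoc] at aca ⊢; rw [aca]
  have hinv : (a * b * c)⁻¹ = c * b * a := by
    simp [inv_eq_of_mul_eq_one_left ha, inv_eq_of_mul_eq_one_left hb,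
      inv_eq_of_mul_eq_one_left hc, mul_assoc]
  have hsq : (a * b * c) ^ 2 = (a * b * c)⁻¹ ^ 2 := by
    rw [hinv]; simp only [sq, mul_assoc]
    calc a * (b * (c * (a * (b * c)))) = a * (b * (c * (a * (c * b)))) := by rw [hbc.eq]
      _ = a * (b * (a * (c * (a * b)))) := by rw [cac]
      _ = b * (a * (b * (c * (a * b)))) := by rw [bab]
      _ = b * (a * (c * (b * (a * b)))) := by rw [hbc.left_comm]
      _ = b * (a * (c * (a * (b * a)))) := by rw [aba]
      _ = b * (c * (a * (c * (b * a)))) := by rw [cac]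
      _ = c * (b * (a * (c * (b * a)))) := by rw [hbc.left_comm]
  rw [show 4 = 2 + 2 from rfl, pow_add]
  nth_rewrite 2 [hsq]
  rw [inv_pow, mul_inv_cancel]

end InvolutionRelations

namespace AffineWeyl

open Equiv

variable {r : ℕ}

lemma natCast_eq_natCast_iff {p q : ℕ} (hp : p ≤ 2 * r) (hq : q ≤ 2 * r) :
    (p : Fin (2 * r + 1)) = q ↔ p = q := by
  rw [Fin.ext_iff, Fin.val_cast_of_lt (by omega), Fin.val_cast_of_lt (by omega)]

lemma natCast_eq_natCast_add_one_iff {p q : ℕ} (hp : p ≤ 2 * r) (hq : q ≤ 2 * r) :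
    (p : Fin (2 * r + 1)) = q + 1 ↔ p = q + 1 ∨ (p = 0 ∧ q = 2 * r) := by
  simp only [Fin.ext_iff, Fin.val_add_one, Fin.val_last,
    Fin.val_cast_of_lt (by omega : p < 2 * r + 1), Fin.val_cast_of_lt (by omega : q < 2 * r + 1)]
  split_ifs <;> omega

lemma add_one_ne_self (hr : r ≠ 0) (k : Fin (2 * r + 1)) : k + 1 ≠ k := by
  simp only [ne_eq, Fin.ext_iff, Fin.val_add_one, Fin.val_last]
  split_ifs <;> omega

lemma add_one_add_one_ne_self (hr : r ≠ 0) (k : Fin (2 * r + 1)) : k + 1 + 1 ≠ k := by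
  simp only [ne_eq, Fin.ext_iff, Fin.val_add_one, Fin.val_last]
  split_ifs <;> omega

lemma affACoxeterMatrix_apply (i j : Fin (2 * r + 1)) :
    (affACoxeterMatrix r).M i j = if i = j then 1 else if i = j + 1 ∨ j = i + 1 then 3 else 2 :=
  rfl

lemma affACoxeterMatrix_apply_add_one {i : Fin (2 * r + 1)} (h : i + 1 ≠ i) :
    (affACoxeterMatrix r).M i (i + 1) = 3 := by
  rw [affACoxeterMatrix_apply, if_neg h.symm, if_pos (Or.inr rfl)]

lemma simple_commute {i j : Fin (2 * r + 1)} (hij : i ≠ j) (hi : i ≠ j + 1) (hj : j ≠ i + 1) :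
    Commute ((affCS r).simple i) ((affCS r).simple j) := by
  have h := (affCS r).simple_mul_simple_pow i j
  rw [affACoxeterMatrix_apply, if_neg hij, if_neg (by tauto), sq, mul_eq_one_iff_eq_inv,
    mul_inv_rev, (affCS r).inv_simple, (affCS r).inv_simple] at h
  exact h

lemma simple_mul_simple_add_one_pow_three (i : Fin (2 * r + 1)) :
    ((affCS r).simple i * (affCS r).simple (i + 1)) ^ 3 = 1 := by
  by_cases h : i + 1 = i
  · rw [h, (affCS r).simple_mul_simple_self, one_pow]
  · rw [← affACoxeterMatrix_apply_add_one h, (affCS r).simple_mul_simple_pow]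

lemma simple_add_one_mul_simple_pow_three (i : Fin (2 * r + 1)) :
    ((affCS r).simple (i + 1) * (affCS r).simple i) ^ 3 = 1 := by
  by_cases h : i + 1 = i
  · rw [h, (affCS r).simple_mul_simple_self, one_pow]
  · rw [← affACoxeterMatrix_apply_add_one h, (affCS r).simple_mul_simple_pow']

lemma sgen_mul_self (p : ℕ) : sgen r p * sgen r p = 1 :=
  (affCS r).simple_mul_simple_self _

lemma sgen_ne_one (p : ℕ) : sgen r p ≠ 1 := by
  intro h
  have : (affCS r).length (sgen r p) = 1 := (affCS r).length_simple _
  simp [h] at this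

lemma orderOf_sgen (p : ℕ) : orderOf (sgen r p) = 2 :=
  orderOf_eq_prime ((affCS r).simple_sq _) (sgen_ne_one p)

lemma sgen_commute {p q : ℕ} (hq : q ≤ 2 * r) (hpq : p + 2 ≤ q)
    (hwrap : p = 0 → q < 2 * r) :
    Commute (sgen r p) (sgen r q) := by
  apply simple_commute <;>
    simp only [ne_eq, natCast_eq_natCast_iff, natCast_eq_natCast_add_one_iff,
      (by omega : p ≤ 2 * r), hq] <;>
    omega

lemma sgen_mul_sgen_succ_pow_three (p : ℕ) : (sgen r p * sgen r (p + 1)) ^ 3 = 1 := by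
  rw [sgen, sgen, Nat.cast_succ]
  exact simple_mul_simple_add_one_pow_three _

lemma sgen_succ_mul_sgen_pow_three (p : ℕ) : (sgen r (p + 1) * sgen r p) ^ 3 = 1 := by
  rw [sgen, sgen, Nat.cast_succ]
  exact simple_add_one_mul_simple_pow_three _

lemma sgen_zero_mul_sgen_last_pow_three : (sgen r 0 * sgen r (2 * r)) ^ 3 = 1 := by
  rw [show sgen r 0 = sgen r (2 * r + 1) by rw [sgen, sgen, Fin.natCast_self, Nat.cast_zero]]
  exact sgen_succ_mul_sgen_pow_three _

lemma sgen_braid (p : ℕ) :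
    sgen r p * sgen r (p + 1) * sgen r p = sgen r (p + 1) * sgen r p * sgen r (p + 1) := by
  simpa only [mul_assoc] using braid_of_mul_pow_three (sgen_mul_self p) (sgen_mul_self (p + 1))
    (sgen_mul_sgen_succ_pow_three p)

lemma rgen_zero : rgen r 0 = sgen r 0 := by
  simp [rgen, rword, sgen]

lemma rgen_of_pos_of_lt {i : ℕ} (h0 : 0 < i) (hi : i < r) :
    rgen r i = sgen r i * sgen r (2 * r + 1 - i) := by
  simp [rgen, rword, sgen, h0.ne', hi, CoxeterSystem.wordProd_cons]

lemma rgen_self (hr : r ≠ 0) : rgen r r = sgen r r * sgen r (r + 1) * sgen r r := by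
  simp [rgen, rword, sgen, hr, CoxeterSystem.wordProd_cons, mul_assoc]

lemma mem_rword {i : ℕ} (hi : i ≤ r) {p : Fin (2 * r + 1)} (hp : p ∈ rword r i) :
    ∃ n ≤ 2 * r, (n = i ∨ n + i = 2 * r + 1) ∧ p = n := by
  unfold rword at hp
  split_ifs at hp with h0 hir <;> simp only [List.mem_cons, List.not_mem_nil, or_false] at hp
  · exact ⟨0, by omega, by omega, by rw [hp, Nat.cast_zero]⟩
  · rcases hp with rfl | rfl
    · exact ⟨i, by omega, by omega, rfl⟩
    · exact ⟨2 * r + 1 - i, by omega, by omega, rfl⟩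
  · rcases hp with rfl | rfl | rfl
    · exact ⟨r, by omega, by omega, rfl⟩
    · exact ⟨r + 1, by omega, by omega, rfl⟩
    · exact ⟨r, by omega, by omega, rfl⟩

lemma isLiftable_swap_add_one :
    (affACoxeterMatrix r).IsLiftable fun i => swap i (i + 1) := by
  intro i j
  dsimp only
  by_cases hij : i = j
  · rw [hij, affACoxeterMatrix_apply, if_pos rfl, pow_one, swap_mul_self]
  have hr : r ≠ 0 := by
    rintro rfl
    exact hij (Fin.ext (by omega))
  have h1 := add_one_ne_self hr
  have h2 := add_one_add_one_ne_self hr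
  rw [affACoxeterMatrix_apply, if_neg hij]
  split_ifs with hadj
  · rcases hadj with rfl | rfl
    · rw [swap_comm j, ← (Perm.isThreeCycle_swap_mul_swap_same (h1 (j + 1)).symm (h1 j)
        (h2 j)).orderOf, pow_orderOf_eq_one]
    · rw [swap_comm i, ← (Perm.isThreeCycle_swap_mul_swap_same (h1 i) (h1 (i + 1)).symm
        (h2 i).symm).orderOf, pow_orderOf_eq_one]
  · obtain ⟨hi, hj⟩ := not_or.mp hadj
    have hdisj : Commute (swap i (i + 1)) (swap j (j + 1)) :=
      (Perm.disjoint_swap_swap (by simp [hij, hi, Ne.symm hj, (h1 i).symm, (h1 j).symm])).commute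
    rw [hdisj.mul_pow, sq, sq, swap_mul_self, swap_mul_self, one_mul]

def permRep (r : ℕ) : AffW r →* Perm (Fin (2 * r + 1)) :=
  (affCS r).lift ⟨_, isLiftable_swap_add_one⟩

lemma permRep_sgen (p : ℕ) : permRep r (sgen r p) = swap (p : Fin (2 * r + 1)) (p + 1) :=
  (affCS r).lift_apply_simple _ _

lemma permRep_sgen_apply_of_ne {p x : ℕ} (hp : p ≤ 2 * r) (hx : x ≤ 2 * r) (hxp : x ≠ p)
    (hxp' : x ≠ p + 1) (hwrap : x = 0 → p ≠ 2 * r) :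
    permRep r (sgen r p) x = x := by
  rw [permRep_sgen, swap_apply_of_ne_of_ne] <;>
    simp only [ne_eq, natCast_eq_natCast_iff hx hp, natCast_eq_natCast_add_one_iff hx hp] <;>
    omega

lemma permRep_sgen_apply_of_eq {p x : ℕ} (h : x = p) :
    permRep r (sgen r p) x = ((p + 1 : ℕ) : Fin (2 * r + 1)) := by
  rw [permRep_sgen, h, swap_apply_left, Nat.cast_succ]

lemma permRep_sgen_apply_of_eq_add_one {p x : ℕ} (h : x = p + 1) :
    permRep r (sgen r p) x = p := by
  rw [permRep_sgen, h, Nat.cast_succ, swap_apply_right]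

lemma ne_one_of_permRep_apply {g : AffW r} {x y : ℕ} (hx : x ≤ 2 * r) (hy : y ≤ 2 * r)
    (hxy : y ≠ x) (h : permRep r g x = y) : g ≠ 1 := by
  rintro rfl
  exact hxy ((natCast_eq_natCast_iff hy hx).mp (by rw [← h, map_one, Perm.one_apply]))

lemma orderOf_rgen {i : ℕ} (hi : i ≤ r) : orderOf (rgen r i) = 2 := by
  rcases Nat.eq_zero_or_pos i with rfl | h0
  · rw [rgen_zero, orderOf_sgen]
  rcases hi.lt_or_eq with hi | hi
  · rw [rgen_of_pos_of_lt h0 hi]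
    have hc : Commute (sgen r i) (sgen r (2 * r + 1 - i)) :=
      sgen_commute (by omega) (by omega) (by omega)
    refine orderOf_eq_prime ?_ (ne_one_of_permRep_apply (x := i) (y := i + 1)
      (by omega) (by omega) (by omega) ?_)
    · rw [hc.mul_pow, sq, sq, sgen_mul_self, sgen_mul_self, one_mul]
    · simp (disch := omega) only [map_mul, Perm.mul_apply, permRep_sgen_apply_of_ne,
        permRep_sgen_apply_of_eq]
  · rw [hi, rgen_self (by omega)]
    refine (SemiconjBy.orderOf_eq (sgen r r) ?_).symm.trans (orderOf_sgen (r + 1))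
    simp only [SemiconjBy, mul_assoc, sgen_mul_self, mul_one]

lemma orderOf_rgen_zero_mul_rgen_one (hr : 2 ≤ r) : orderOf (rgen r 0 * rgen r 1) = 4 := by
  rw [rgen_zero, rgen_of_pos_of_lt one_pos (by omega), show 2 * r + 1 - 1 = 2 * r by omega,
    ← mul_assoc]
  refine orderOf_eq_four (ne_one_of_permRep_apply (x := 1) (y := 0)
    (by omega) (by omega) (by omega) ?_) ?_
  · simp (disch := omega) only [sq, map_mul, Perm.mul_apply, permRep_sgen_apply_of_ne,
      permRep_sgen_apply_of_eq, permRep_sgen_apply_of_eq_add_one]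
  · exact mul_mul_pow_four_eq_one (sgen_mul_self 0) (sgen_mul_self 1) (sgen_mul_self _)
      (sgen_mul_sgen_succ_pow_three 0) sgen_zero_mul_sgen_last_pow_three
      (sgen_commute (by omega) (by omega) (by omega))

/-- `r_r = s_r s_{r+1} s_r = s_{r+1} s_r s_{r+1}` is the middle node of an `A₃` diagram
`s_{r-1} — r_r — s_{r+2}`. -/
lemma orderOf_rgen_pred_mul_rgen_self (hr : 2 ≤ r) :
    orderOf (rgen r (r - 1) * rgen r r) = 4 := by
  rw [rgen_of_pos_of_lt (by omega) (by omega), show 2 * r + 1 - (r - 1) = r + 2 by omega,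
    rgen_self (by omega)]
  set a := sgen r (r - 1)
  set b := sgen r (r + 2)
  set e := sgen r r * sgen r (r + 1) * sgen r r with he
  have hee : e * e = 1 := by
    rw [← sq]; exact conj_pow_eq_one_of_mul_self (sgen_mul_self r) ((affCS r).simple_sq _)
  have hea : (e * a) ^ 3 = 1 := by
    have hc : Commute (sgen r (r + 1)) a := (sgen_commute (by omega) (by omega) (by omega)).symm
    have h := sgen_succ_mul_sgen_pow_three (r := r) (r - 1)
    rw [Nat.sub_add_cancel (by omega)] at h
    rw [show e * a = sgen r (r + 1) * (sgen r r * a) * sgen r (r + 1) by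
      rw [he, sgen_braid]; simp only [mul_assoc, hc.eq]]
    exact conj_pow_eq_one_of_mul_self (sgen_mul_self _) h
  have heb : (e * b) ^ 3 = 1 := by
    have hc : Commute (sgen r r) b := sgen_commute (by omega) (by omega) (by omega)
    rw [show e * b = sgen r r * (sgen r (r + 1) * b) * sgen r r by
      rw [he]; simp only [mul_assoc, hc.eq]]
    exact conj_pow_eq_one_of_mul_self (sgen_mul_self _) (sgen_mul_sgen_succ_pow_three (r + 1))
  rw [(SemiconjBy.orderOf_eq e (mul_assoc _ _ _).symm :
      orderOf (a * b * e) = orderOf (e * (a * b))), ← mul_assoc]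
  refine orderOf_eq_four (ne_one_of_permRep_apply (x := r) (y := r + 2)
    (by omega) (by omega) (by omega) ?_) (mul_mul_pow_four_eq_one hee (sgen_mul_self _)
      (sgen_mul_self _) hea heb (sgen_commute (by omega) (by omega) (by omega)))
  simp (disch := omega) only [a, b, e, sq, map_mul, Perm.mul_apply, permRep_sgen_apply_of_ne,
    permRep_sgen_apply_of_eq, permRep_sgen_apply_of_eq_add_one]

lemma orderOf_rgen_mul_rgen_succ {i : ℕ} (hi : 1 ≤ i) (hir : i + 2 ≤ r) :
    orderOf (rgen r i * rgen r (i + 1)) = 3 := by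
  rw [rgen_of_pos_of_lt (by omega) (by omega), rgen_of_pos_of_lt (by omega) (by omega)]
  refine orderOf_eq_prime ?_ (ne_one_of_permRep_apply (x := i) (y := i + 1)
    (by omega) (by omega) (by omega) ?_)
  · obtain ⟨q, hq, hq'⟩ : ∃ q, 2 * r + 1 - (i + 1) = q ∧ 2 * r + 1 - i = q + 1 :=
      ⟨_, rfl, by omega⟩
    rw [hq, hq']
    have hc : Commute (sgen r (q + 1)) (sgen r (i + 1)) :=
      (sgen_commute (by omega) (by omega) (by omega)).symm
    have hcc : Commute (sgen r i * sgen r (i + 1)) (sgen r (q + 1) * sgen r q) := by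
      refine .mul_left (.mul_right ?_ ?_) (.mul_right ?_ ?_) <;>
        exact sgen_commute (by omega) (by omega) (by omega)
    rw [mul_assoc, hc.left_comm, ← mul_assoc, hcc.mul_pow, sgen_mul_sgen_succ_pow_three,
      sgen_succ_mul_sgen_pow_three, one_mul]
  · simp (disch := omega) only [map_mul, Perm.mul_apply, permRep_sgen_apply_of_ne,
      permRep_sgen_apply_of_eq]

lemma rgen_commute {i j : ℕ} (hij : i + 2 ≤ j) (hj : j ≤ r) :
    Commute (rgen r i) (rgen r j) := by
  refine Commute.list_prod_left _ _ fun x hx => Commute.list_prod_right _ _ fun y hy => ?_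
  obtain ⟨p, hp, rfl⟩ := List.mem_map.mp hx
  obtain ⟨q, hq, rfl⟩ := List.mem_map.mp hy
  obtain ⟨n, hn, hni, rfl⟩ := mem_rword (by omega) hp
  obtain ⟨m, hm, hmj, rfl⟩ := mem_rword hj hq
  change Commute (sgen r n) (sgen r m)
  rcases (by omega : n + 2 ≤ m ∨ m + 2 ≤ n) with h | h
  · exact sgen_commute hm h (by omega)
  · exact (sgen_commute hn h (by omega)).symm

end AffineWeyl

open AffineWeyl in
/-- For `r ≥ 2`, the elements `r_0, r_1, …, r_r` of `W` satisfy the Coxeter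
relations of affine type `A_{2r}^{(2)}`: each `r_i` has order 2; `r_0 r_1` has order 4;
`r_{r-1} r_r` has order 4; `r_i r_{i+1}` has order 3 for `1 ≤ i ≤ r-2`;
and `r_i r_j = r_j r_i` whenever `0 ≤ i < j ≤ r` with `j - i ≥ 2`. -/
theorem statement10 (r : ℕ) (hr : 2 ≤ r) :
    (∀ i, i ≤ r → orderOf (rgen r i) = 2) ∧
      orderOf (rgen r 0 * rgen r 1) = 4 ∧
      orderOf (rgen r (r - 1) * rgen r r) = 4 ∧
      (∀ i, 1 ≤ i → i ≤ r - 2 → orderOf (rgen r i * rgen r (i + 1)) = 3) ∧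
      (∀ i j, i < j → j ≤ r → 2 ≤ j - i → rgen r i * rgen r j = rgen r j * rgen r i) :=
  ⟨fun _ hi => orderOf_rgen hi, orderOf_rgen_zero_mul_rgen_one hr,
    orderOf_rgen_pred_mul_rgen_self hr,
    fun _ hi hir => orderOf_rgen_mul_rgen_succ hi (by omega),
    fun _ _ _ hj hji => (rgen_commute (by omega) hj).eq⟩
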